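/- Let F be a field of prime characteristic p, A an associative F-algebra, and e ∈ A with e^{⌊(p+1)/2⌋} = 0. Define the truncated exponential Y(t) = Σ_{k=0}^{p-1} (t^k / k!) · e^{k} for t ∈ F. Then for every x ∈ A and every t ∈ F: Σ_{k=0}^{p-1} (t^k / k!) · (ad e)^k (x) = Y(t) · x · Y(-t). -/

import Mathlib

/-! `t • ad e` is the sum of the commuting operators `mulLeft (t • e)` and `mulRight (-t • e)`,
whose `⌊(p+1)/2⌋`-th powers vanish. For commuting `a`, `b` with `a ^ n = b ^ m = 0` and
`n + m ≤ N + 1`, the truncated exponential at `N` is multiplicative: in the binomial expansion,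
every term `a ^ i * b ^ j` cut off by the truncation (`i + j ≥ N`) is already zero. -/

open Finset LinearMap Nat

theorem Finset.sum_range_diag_eq_sum_range_sum_range {M : Type*} [AddCommMonoid M] (N : ℕ)
    (g : ℕ → ℕ → M) (hg : ∀ i j, N ≤ i + j → g i j = 0) :
    ∑ k ∈ range N, ∑ i ∈ range (k + 1), g i (k - i) = ∑ i ∈ range N, ∑ j ∈ range N, g i j := by
  rw [sum_range_diag_flip]
  refine sum_congr rfl fun i _ ↦ sum_subset (range_subset_range.2 (Nat.sub_le N i)) ?_
  intro j _ hj
  exact hg i j (by simp only [mem_range] at hj; omega)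

theorem inv_factorial_mul_choose {F : Type*} [Field F] {k i : ℕ} (hi : i ≤ k)
    (hk : (k ! : F) ≠ 0) :
    (k ! : F)⁻¹ * k.choose i = (i ! : F)⁻¹ * ((k - i)! : F)⁻¹ := by
  have h : (k.choose i : F) * i ! * (k - i)! = k ! := by
    rw [← Nat.cast_mul, ← Nat.cast_mul, Nat.choose_mul_factorial_mul_factorial hi]
  rw [← h] at hk ⊢
  have hc := left_ne_zero_of_mul (left_ne_zero_of_mul hk)
  field_simp

section TruncExp

variable (F : Type*) [Field F] {B : Type*} [Ring B] [Algebra F B]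

-- `(k ! : F)⁻¹` is the junk value `0` once `k` reaches the characteristic of `F`.
def truncExp (N : ℕ) (a : B) : B :=
  ∑ k ∈ range N, (k ! : F)⁻¹ • a ^ k

variable {F}

theorem truncExp_smul (N : ℕ) (t : F) (a : B) :
    truncExp F N (t • a) = ∑ k ∈ range N, (t ^ k / (k ! : F)) • a ^ k :=
  sum_congr rfl fun k _ ↦ by rw [smul_pow, smul_smul, div_eq_inv_mul]

theorem truncExp_add_of_commute {a b : B} (hab : Commute a b) {n m N : ℕ} (ha : a ^ n = 0)
    (hb : b ^ m = 0) (hN : n + m ≤ N + 1) (hfac : ∀ k < N, (k ! : F) ≠ 0) :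
    truncExp F N (a + b) = truncExp F N a * truncExp F N b := by
  rw [truncExp, truncExp, truncExp, sum_mul_sum, ← sum_range_diag_eq_sum_range_sum_range N
    fun i j ↦ ((i ! : F)⁻¹ • a ^ i) * ((j ! : F)⁻¹ • b ^ j)]
  · refine sum_congr rfl fun k hk ↦ ?_
    rw [hab.add_pow, smul_sum]
    refine sum_congr rfl fun i hi ↦ ?_
    rw [← nsmul_eq_mul', ← Nat.cast_smul_eq_nsmul F, smul_smul, smul_mul_smul_comm,
      inv_factorial_mul_choose (by simp only [mem_range] at hi; omega)
        (hfac k (by simpa using hk))]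
  · intro i j hij
    obtain h | h : n ≤ i ∨ m ≤ j := by omega
    · simp [pow_eq_zero_of_le h ha]
    · simp [pow_eq_zero_of_le h hb]

theorem truncExp_mulLeft_apply (N : ℕ) (a y : B) :
    truncExp F N (mulLeft F a) y = truncExp F N a * y := by
  simp [truncExp, LinearMap.sum_apply, pow_mulLeft, sum_mul]

theorem truncExp_mulRight_apply (N : ℕ) (a y : B) :
    truncExp F N (mulRight F a) y = y * truncExp F N a := by
  simp [truncExp, LinearMap.sum_apply, pow_mulRight, mul_sum]

end TruncExp

/-- Under the over-restricted condition `e^{⌊(p+1)/2⌋} = 0`, the truncated exponential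
of `t • ad e` applied to `x` equals conjugation by the truncated exponential
`Y(t) = ∑_{k=0}^{p-1} (t^k/k!) e^k`:
`∑_{k=0}^{p-1} (t^k/k!) (ad e)^k (x) = Y(t) x Y(-t)`. -/
theorem truncExp_ad_eq_conj {F : Type*} [Field F] (p : ℕ) [Fact p.Prime] [CharP F p]
    {A : Type*} [Ring A] [Algebra F A] (e : A) (he : e ^ ((p + 1) / 2) = 0)
    (x : A) (t : F) :
    ∑ k ∈ Finset.range p, (t ^ k / (k.factorial : F)) • (fun y => e * y - y * e)^[k] x =
      (∑ k ∈ Finset.range p, (t ^ k / (k.factorial : F)) • e ^ k) * x *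
        (∑ k ∈ Finset.range p, ((-t) ^ k / (k.factorial : F)) • e ^ k) := by
  have hfac : ∀ k < p, (k ! : F) ≠ 0 := fun k hk ↦ by
    rw [Ne, CharP.cast_eq_zero_iff F p, (Fact.out : p.Prime).dvd_factorial]
    omega
  have hL : mulLeft F (t • e) ^ ((p + 1) / 2) = 0 := by
    rw [pow_mulLeft, smul_pow, he, smul_zero, mulLeft_zero_eq_zero]
  have hR : mulRight F ((-t) • e) ^ ((p + 1) / 2) = 0 := by
    rw [pow_mulRight, smul_pow, he, smul_zero, mulRight_zero_eq_zero]
  have hconj := LinearMap.congr_fun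
    (truncExp_add_of_commute (commute_mulLeft_right _ _) hL hR (by omega) hfac) x
  rw [Module.End.mul_apply, truncExp_mulRight_apply, truncExp_mulLeft_apply, truncExp_smul,
    truncExp_smul, ← mul_assoc] at hconj
  have had : mulLeft F (t • e) + mulRight F ((-t) • e) = t • (mulLeft F e - mulRight F e) := by
    ext y
    simp [sub_eq_add_neg]
  rw [← hconj, had, truncExp_smul, LinearMap.sum_apply]
  refine sum_congr rfl fun k _ ↦ ?_
  rw [LinearMap.smul_apply, Module.End.pow_apply]
  rfl
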